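/- arXiv:2410.03623 — 3 statements merged into one kernel-verified Lean document; each statement's English description precedes it below -/
import Mathlib

section
/- For all integers n and m with 0 ≤ m, the relation ∂/∂x₀ U_{n,m}^{±} = (n+m) U_{n-1,m}^{±} holds (valid both for n ≥ 1 and for n ≤ -2). -/
open MeasureTheory Real

noncomputable section

/-- Euclidean space `ℝ³` with coordinates `x 0, x 1, x 2`. -/
abbrev E3 := EuclideanSpace ℝ (Fin 3)

/-- Legendre polynomial of degree `n` via Rodrigues' formula. -/
def legendreP (n : ℕ) (t : ℝ) : ℝ :=
  (1 / (2 ^ n * n.factorial : ℝ)) * iteratedDeriv n (fun s : ℝ => (s ^ 2 - 1) ^ n) t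

/-- Associated Legendre function of nonnegative integer degree `n` and order `m`
(Ferrers-type definition, no Condon–Shortley phase):
`P_n^m(t) = (1-t²)^{m/2} (d/dt)^m P_n(t)`. -/
def assocLegendreNat (n m : ℕ) (t : ℝ) : ℝ :=
  (1 - t ^ 2) ^ ((m : ℝ) / 2) * iteratedDeriv m (legendreP n) t

/-- Associated Legendre function of arbitrary integer degree, using the
reflection `P_{-n}^m = P_{n-1}^m` for negative degrees. -/
def assocLegendre (n : ℤ) (m : ℕ) (t : ℝ) : ℝ :=
  if 0 ≤ n then assocLegendreNat n.toNat m t else assocLegendreNat (-n - 1).toNat m t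

/-- Spherical radius `ρ`. -/
def sphRho (x : E3) : ℝ := Real.sqrt (x 0 ^ 2 + x 1 ^ 2 + x 2 ^ 2)

/-- Azimuthal angle `φ` of the point `(x₁, x₂)`. -/
def sphPhi (x : E3) : ℝ := Complex.arg ⟨x 1, x 2⟩

/-- Azimuthal factor `Φ_m^±(φ)`; `sgn = true` corresponds to `+` (cosine),
`sgn = false` to `−` (sine). -/
def PhiFac (m : ℕ) (sgn : Bool) (φ : ℝ) : ℝ :=
  if sgn then Real.cos (m * φ) else Real.sin (m * φ)

/-- Solid spherical harmonic `U_{n,m}^{±}(x) = ρ^n P_n^m(cos θ) Φ_m^{±}(φ)`. -/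
def solidU (n : ℤ) (m : ℕ) (sgn : Bool) (x : E3) : ℝ :=
  sphRho x ^ n * assocLegendre n m (x 0 / sphRho x) * PhiFac m sgn (sphPhi x)

/-- The exterior `B^e` of the closed unit ball in `ℝ³`. -/
def extB : Set E3 := {x : E3 | 1 < ‖x‖}

/-! For `x ≠ 0` write `t = x₀ / ρ`. Then `U_{n,m}^± = ρ^(n-m) Q(t) K(x)`, where `Q = P_n^(m)` is
the `m`-th derivative of the Legendre polynomial and `K = Re, Im (x₁ + i x₂)^m` does not depend
on `x₀`. Since `∂₀ (ρ^k Q(t)) = ρ^(k-1) ((1 - t²) Q'(t) + k t Q(t))`, the claim reduces to the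
polynomial identity `(1 - X²) P_n^(m+1) + (n - m) X P_n^(m) = (n + m) P_{n-1}^(m)`, where
`P_{-n} = P_{n-1}`. It follows by induction on `m` from the classical recurrences
`(1 - X²) P_n' + n X P_n = n P_{n-1}` and `P_{n-1}' = X P_n' - n P_n` (both valid for every
integer `n` under this convention), which come from Rodrigues' formula: differentiating only
shifts the coefficients. -/

open Polynomial Topology

section Ladder

variable {R : Type*} [CommRing R]

lemma iterate_derivative_eq_X_mul_add {p q : R[X]} {c : R}
    (h : derivative q = X * derivative p + C c * p) (m : ℕ) :
    derivative^[m + 1] q = X * derivative^[m + 1] p + C (c + m) * derivative^[m] p := by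
  induction m with
  | zero => simpa using h
  | succ m ih =>
    rw [Function.iterate_succ_apply', ih]
    simp only [derivative_add, derivative_mul, derivative_X, derivative_C,
      ← Function.iterate_succ_apply' derivative]
    simp only [map_add, map_natCast, map_one, Nat.cast_succ]
    ring

lemma iterate_derivative_ladder {p q : R[X]} {a b : R}
    (h₀ : (1 - X ^ 2) * derivative p + C a * X * p = C b * q)
    (h₁ : derivative q = X * derivative p - C a * p) (m : ℕ) :
    (1 - X ^ 2) * derivative^[m + 1] p + C (a - m) * X * derivative^[m] p =
      C (b + m) * derivative^[m] q := by
  induction m with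
  | zero => simpa using h₀
  | succ m ih =>
    have hq := iterate_derivative_eq_X_mul_add (p := p) (c := -a) (by rw [h₁, map_neg]; ring) m
    have h := congrArg derivative ih
    simp only [derivative_add, derivative_mul, derivative_sub, derivative_X, derivative_C,
      derivative_one, derivative_X_pow, ← Function.iterate_succ_apply' derivative] at h
    simp only [map_add, map_sub, map_natCast, map_one, map_neg, Nat.cast_succ,
      Nat.succ_eq_add_one] at h hq ⊢
    linear_combination h - hq

end Ladder

def legendrePoly (n : ℕ) : ℝ[X] :=
  C (2 ^ n * n.factorial : ℝ)⁻¹ * derivative^[n] ((X ^ 2 - 1) ^ n)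

@[simp] lemma legendrePoly_zero : legendrePoly 0 = 1 := by
  simp [legendrePoly]

lemma derivative_X_sq_sub_one_pow_succ (n : ℕ) :
    derivative ((X ^ 2 - 1 : ℝ[X]) ^ (n + 1)) =
      C (2 * (n + 1) : ℝ) * ((X ^ 2 - 1) ^ n * X) := by
  simp only [derivative_pow, derivative_sub, derivative_one, derivative_X, map_mul, map_add,
    map_natCast, map_ofNat, map_one]
  push_cast
  ring

lemma X_sq_sub_one_mul_derivative_pow (n : ℕ) :
    (X ^ 2 - 1) * derivative ((X ^ 2 - 1 : ℝ[X]) ^ n) =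
      C (2 * n : ℝ) * ((X ^ 2 - 1) ^ n * X) := by
  cases n with
  | zero => simp
  | succ n =>
    rw [derivative_X_sq_sub_one_pow_succ]
    push_cast
    ring

lemma legendrePoly_succ (n : ℕ) :
    legendrePoly (n + 1) =
      C (2 ^ n * n.factorial : ℝ)⁻¹ * derivative^[n] ((X ^ 2 - 1) ^ n * X) := by
  rw [legendrePoly, Function.iterate_succ_apply, derivative_X_sq_sub_one_pow_succ,
    iterate_derivative_C_mul, ← mul_assoc, ← C_mul]
  congr 2
  push_cast [Nat.factorial_succ]
  field_simp
  ring

/-- Apply `derivative^[k + 1]` to `(X² - 1) R' = 2 (k + 1) X R`, where `R = (X² - 1)^(k + 1)`. -/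
lemma X_sq_sub_one_mul_iterate_derivative (k : ℕ) :
    (X ^ 2 - 1) * derivative^[k + 2] ((X ^ 2 - 1 : ℝ[X]) ^ (k + 1)) =
      C ((k + 1) * (k + 2) : ℝ) * derivative^[k] ((X ^ 2 - 1) ^ (k + 1)) := by
  set R : ℝ[X] := (X ^ 2 - 1) ^ (k + 1)
  have h := congrArg (derivative^[k + 1]) (X_sq_sub_one_mul_derivative_pow (k + 1))
  rw [show (X ^ 2 - 1) * derivative R = derivative R * X * X - derivative R by ring,
    iterate_derivative_sub, iterate_derivative_mul_X, iterate_derivative_derivative_mul_X,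
    Nat.add_sub_cancel, iterate_derivative_derivative_mul_X, iterate_derivative_C_mul,
    iterate_derivative_mul_X, Nat.add_sub_cancel, ← Function.iterate_succ_apply] at h
  simp only [Nat.succ_eq_add_one, nsmul_eq_mul, map_mul, map_add, map_natCast, map_ofNat,
    map_one] at h ⊢
  push_cast at h ⊢
  linear_combination h

lemma derivative_legendrePoly_succ (n : ℕ) :
    derivative (legendrePoly (n + 1)) =
      X * derivative (legendrePoly n) + C (n + 1 : ℝ) * legendrePoly n := by
  rw [legendrePoly_succ, legendrePoly, derivative_C_mul, derivative_C_mul,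
    ← Function.iterate_succ_apply' derivative, iterate_derivative_mul_X, Nat.succ_sub_one,
    Function.iterate_succ_apply']
  simp only [nsmul_eq_mul, map_add, map_natCast, map_one]
  push_cast
  ring

lemma one_sub_X_sq_mul_derivative_legendrePoly (n : ℕ) :
    (1 - X ^ 2) * derivative (legendrePoly n) - C (n + 1 : ℝ) * X * legendrePoly n =
      -C (n + 1 : ℝ) * legendrePoly (n + 1) := by
  cases n with
  | zero =>
    rw [legendrePoly_succ]
    simp
  | succ k =>
    rw [legendrePoly_succ (k + 1), legendrePoly, derivative_C_mul,
      ← Function.iterate_succ_apply' derivative, iterate_derivative_mul_X, Nat.add_sub_cancel]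
    have h := X_sq_sub_one_mul_iterate_derivative k
    simp only [nsmul_eq_mul, map_add, map_natCast, map_one, map_mul, map_ofNat] at h ⊢
    push_cast at h ⊢
    linear_combination (-C (2 ^ (k + 1) * (k + 1).factorial : ℝ)⁻¹) * h

lemma one_sub_X_sq_mul_derivative_legendrePoly_succ (n : ℕ) :
    (1 - X ^ 2) * derivative (legendrePoly (n + 1)) + C (n + 1 : ℝ) * X * legendrePoly (n + 1) =
      C (n + 1 : ℝ) * legendrePoly n := by
  linear_combination (1 - X ^ 2) * derivative_legendrePoly_succ n +
    X * one_sub_X_sq_mul_derivative_legendrePoly n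

lemma derivative_legendrePoly_eq_sub (n : ℕ) :
    derivative (legendrePoly n) =
      X * derivative (legendrePoly (n + 1)) - C (n + 1 : ℝ) * legendrePoly (n + 1) := by
  linear_combination -X * derivative_legendrePoly_succ n +
    one_sub_X_sq_mul_derivative_legendrePoly n

def legendreZ (n : ℤ) : ℝ[X] :=
  if 0 ≤ n then legendrePoly n.toNat else legendrePoly (-n - 1).toNat

lemma legendreZ_natCast (n : ℕ) : legendreZ n = legendrePoly n := by
  simp [legendreZ]

lemma legendreZ_negSucc (n : ℕ) : legendreZ (Int.negSucc n) = legendrePoly n := by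
  rw [legendreZ, if_neg (Int.negSucc_lt_zero n).not_ge]
  congr
  omega

lemma one_sub_X_sq_mul_derivative_legendreZ (n : ℤ) :
    (1 - X ^ 2) * derivative (legendreZ n) + C (n : ℝ) * X * legendreZ n =
      C (n : ℝ) * legendreZ (n - 1) := by
  rcases n with (_ | n) | n
  · simp [legendreZ]
  · rw [Int.ofNat_eq_natCast, legendreZ_natCast, show ((n + 1 : ℕ) : ℤ) - 1 = n by omega,
      legendreZ_natCast]
    exact_mod_cast one_sub_X_sq_mul_derivative_legendrePoly_succ n
  · rw [show Int.negSucc n - 1 = Int.negSucc (n + 1) from rfl, legendreZ_negSucc,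
      legendreZ_negSucc, Int.cast_negSucc, map_neg, Nat.cast_succ]
    linear_combination one_sub_X_sq_mul_derivative_legendrePoly n

lemma derivative_legendreZ_sub_one (n : ℤ) :
    derivative (legendreZ (n - 1)) = X * derivative (legendreZ n) - C (n : ℝ) * legendreZ n := by
  rcases n with (_ | n) | n
  · simp [legendreZ]
  · rw [Int.ofNat_eq_natCast, legendreZ_natCast, show ((n + 1 : ℕ) : ℤ) - 1 = n by omega,
      legendreZ_natCast]
    exact_mod_cast derivative_legendrePoly_eq_sub n
  · rw [show Int.negSucc n - 1 = Int.negSucc (n + 1) from rfl, legendreZ_negSucc,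
      legendreZ_negSucc, Int.cast_negSucc, map_neg, Nat.cast_succ]
    linear_combination derivative_legendrePoly_succ n

lemma legendreZ_ladder (n : ℤ) (m : ℕ) :
    (1 - X ^ 2) * derivative^[m + 1] (legendreZ n) +
        C ((n - m : ℤ) : ℝ) * X * derivative^[m] (legendreZ n) =
      C ((n + m : ℤ) : ℝ) * derivative^[m] (legendreZ (n - 1)) := by
  push_cast
  exact iterate_derivative_ladder (one_sub_X_sq_mul_derivative_legendreZ n)
    (derivative_legendreZ_sub_one n) m

lemma iteratedDeriv_eval (p : ℝ[X]) (k : ℕ) :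
    iteratedDeriv k (fun t => p.eval t) = fun t => (derivative^[k] p).eval t := by
  induction k with
  | zero => simp
  | succ k ih =>
    ext t
    rw [iteratedDeriv_succ, ih, Function.iterate_succ_apply', Polynomial.deriv]

lemma legendreP_eq_eval (n : ℕ) : legendreP n = fun t => (legendrePoly n).eval t := by
  have h : (fun s : ℝ => (s ^ 2 - 1) ^ n) = fun s => ((X ^ 2 - 1) ^ n : ℝ[X]).eval s := by
    simp
  ext t
  simp [legendreP, legendrePoly, h, iteratedDeriv_eval]

lemma assocLegendre_eq (n : ℤ) (m : ℕ) (t : ℝ) :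
    assocLegendre n m t =
      (1 - t ^ 2) ^ ((m : ℝ) / 2) * (derivative^[m] (legendreZ n)).eval t := by
  unfold assocLegendre legendreZ
  split_ifs <;> simp [assocLegendreNat, legendreP_eq_eval, iteratedDeriv_eval]

lemma sphRho_eq_norm (x : E3) : sphRho x = ‖x‖ := by
  simp [sphRho, EuclideanSpace.norm_eq, Fin.sum_univ_three]

lemma sphRho_pos {x : E3} (hx : x ≠ 0) : 0 < sphRho x :=
  sphRho_eq_norm x ▸ norm_pos_iff.mpr hx

def radialLegendre (k : ℤ) (Q : ℝ[X]) (x : E3) : ℝ := sphRho x ^ k * Q.eval (x 0 / sphRho x)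

/-- `ρ^m sin^m θ Φ_m^±(φ)`, written through `x₁ + i x₂` so that it is visibly smooth
(`sphPhi` jumps across the half-plane `x₂ = 0, x₁ < 0`). -/
def planarHarmonic (m : ℕ) (sgn : Bool) (x : E3) : ℝ :=
  if sgn then ((x 1 + x 2 * Complex.I) ^ m).re else ((x 1 + x 2 * Complex.I) ^ m).im

lemma planarHarmonic_eq (m : ℕ) (sgn : Bool) (x : E3) :
    planarHarmonic m sgn x = √(x 1 ^ 2 + x 2 ^ 2) ^ m * PhiFac m sgn (sphPhi x) := by
  have hz : (⟨x 1, x 2⟩ : ℂ) = x 1 + x 2 * Complex.I := Complex.mk_eq_add_mul_I _ _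
  have hnorm : ‖(⟨x 1, x 2⟩ : ℂ)‖ = √(x 1 ^ 2 + x 2 ^ 2) := by
    rw [Complex.norm_def, Complex.normSq_mk]
    ring_nf
  have hpow : (⟨x 1, x 2⟩ : ℂ) ^ m = (⟨x 1, x 2⟩ : ℂ) ^ ((m : ℝ) : ℂ) := by
    rw [Complex.ofReal_natCast, Complex.cpow_natCast]
  cases sgn
  · simp only [planarHarmonic, PhiFac, sphPhi, Bool.false_eq_true, if_false, ← hz, hpow,
      Complex.cpow_ofReal_im, hnorm, Real.rpow_natCast, mul_comm (m : ℝ)]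
  · simp only [planarHarmonic, PhiFac, sphPhi, if_true, ← hz, hpow,
      Complex.cpow_ofReal_re, hnorm, Real.rpow_natCast, mul_comm (m : ℝ)]

lemma solidU_eq (n : ℤ) (m : ℕ) (sgn : Bool) {x : E3} (hx : x ≠ 0) :
    solidU n m sgn x =
      radialLegendre (n - m) (derivative^[m] (legendreZ n)) x * planarHarmonic m sgn x := by
  have hρ := sphRho_pos hx
  have hρsq : sphRho x ^ 2 = x 0 ^ 2 + x 1 ^ 2 + x 2 ^ 2 := Real.sq_sqrt (by positivity)
  set r := √(x 1 ^ 2 + x 2 ^ 2) with hr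
  have hrsq : r ^ 2 = x 1 ^ 2 + x 2 ^ 2 := Real.sq_sqrt (by positivity)
  have hsin : (1 - (x 0 / sphRho x) ^ 2) ^ ((m : ℝ) / 2) = (r / sphRho x) ^ m := by
    have h : 1 - (x 0 / sphRho x) ^ 2 = (r / sphRho x) ^ 2 := by
      field_simp
      linear_combination hρsq - hrsq
    rw [h, ← Real.rpow_natCast _ 2, ← Real.rpow_mul (by positivity),
      show ((2 : ℕ) : ℝ) * (m / 2) = m by push_cast; ring, Real.rpow_natCast]
  rw [solidU, radialLegendre, assocLegendre_eq, hsin, planarHarmonic_eq, ← hr,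
    zpow_sub₀ hρ.ne', zpow_natCast, div_pow]
  field_simp

lemma hasDerivAt_sqrt_zpow_mul_eval (Q : ℝ[X]) (k : ℤ) {c s : ℝ} (h : 0 < s ^ 2 + c) :
    HasDerivAt (fun s => √(s ^ 2 + c) ^ k * Q.eval (s / √(s ^ 2 + c)))
      (√(s ^ 2 + c) ^ (k - 1) *
        ((1 - X ^ 2) * derivative Q + C (k : ℝ) * X * Q).eval (s / √(s ^ 2 + c))) s := by
  set ρ := √(s ^ 2 + c)
  have hρ0 : ρ ≠ 0 := (Real.sqrt_pos.mpr h).ne'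
  have hρ : HasDerivAt (fun s => √(s ^ 2 + c)) (s / ρ) s := by
    convert ((hasDerivAt_pow 2 s).add_const c).sqrt h.ne' using 1
    push_cast
    field_simp
    ring
  have hpow := (hasDerivAt_zpow k ρ (Or.inl hρ0)).comp s hρ
  have hQ := (Q.hasDerivAt (s / ρ)).comp s ((hasDerivAt_id' s).fun_div hρ hρ0)
  refine (hpow.fun_mul hQ).congr_deriv ?_
  simp only [eval_add, eval_mul, eval_sub, eval_one, eval_pow, eval_X, eval_C, Function.comp]
  rw [zpow_sub_one₀ hρ0]
  field_simp
  ring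

lemma hasLineDerivAt_radialLegendre (k : ℤ) (Q : ℝ[X]) {x : E3} (hx : x ≠ 0) :
    HasLineDerivAt ℝ (radialLegendre k Q)
      (radialLegendre (k - 1) ((1 - X ^ 2) * derivative Q + C (k : ℝ) * X * Q) x)
      x (EuclideanSpace.single 0 1) := by
  have h : 0 < x 0 ^ 2 + (x 1 ^ 2 + x 2 ^ 2) := by
    simpa only [sphRho, Real.sqrt_pos, add_assoc] using sphRho_pos hx
  have hG := hasDerivAt_sqrt_zpow_mul_eval Q k h
  rw [← add_zero (x 0)] at hG
  unfold HasLineDerivAt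
  convert hG.comp_const_add (x 0) 0 using 1
  · ext t
    simp [radialLegendre, sphRho, add_assoc]
  · simp [radialLegendre, sphRho, add_assoc]

lemma differentiableAt_radialLegendre (k : ℤ) (Q : ℝ[X]) {x : E3} (hx : x ≠ 0) :
    DifferentiableAt ℝ (radialLegendre k Q) x := by
  have hnorm : DifferentiableAt ℝ (fun y : E3 => ‖y‖) x :=
    (contDiffAt_norm ℝ hx).differentiableAt one_ne_zero
  have h0 : DifferentiableAt ℝ (fun y : E3 => y 0) x :=
    (EuclideanSpace.proj (𝕜 := ℝ) (0 : Fin 3)).differentiableAt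
  unfold radialLegendre
  simp only [sphRho_eq_norm]
  fun_prop (disch := simp [hx])

lemma differentiable_planarHarmonic (m : ℕ) (sgn : Bool) :
    Differentiable ℝ (planarHarmonic m sgn) := by
  unfold planarHarmonic
  cases sgn <;> simp only [Bool.false_eq_true, if_true, if_false] <;> fun_prop

lemma planarHarmonic_add_smul_single_zero (m : ℕ) (sgn : Bool) (x : E3) (t : ℝ) :
    planarHarmonic m sgn (x + t • EuclideanSpace.single 0 1) = planarHarmonic m sgn x := by
  simp [planarHarmonic]

lemma hasLineDerivAt_radialLegendre_mul_planarHarmonic (k : ℤ) (Q : ℝ[X]) (m : ℕ) (sgn : Bool)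
    {x : E3} (hx : x ≠ 0) :
    HasLineDerivAt ℝ (radialLegendre k Q * planarHarmonic m sgn)
      (radialLegendre (k - 1) ((1 - X ^ 2) * derivative Q + C (k : ℝ) * X * Q) x *
        planarHarmonic m sgn x)
      x (EuclideanSpace.single 0 1) := by
  have h := (hasLineDerivAt_radialLegendre k Q hx).mul_const (planarHarmonic m sgn x)
  unfold HasLineDerivAt at h ⊢
  simpa only [Pi.mul_apply, planarHarmonic_add_smul_single_zero] using h

theorem stmt7_general (n : ℤ) (m : ℕ) (sgn : Bool) (x : E3) (hx : x ≠ 0) :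
    fderiv ℝ (solidU n m sgn) x (EuclideanSpace.single 0 1) =
      ((n + (m : ℤ) : ℤ) : ℝ) * solidU (n - 1) m sgn x := by
  have hU : solidU n m sgn =ᶠ[𝓝 x]
      radialLegendre (n - m) (derivative^[m] (legendreZ n)) * planarHarmonic m sgn :=
    (isOpen_ne.eventually_mem hx).mono fun y hy => solidU_eq n m sgn hy
  have hdiff := (differentiableAt_radialLegendre (n - m) (derivative^[m] (legendreZ n)) hx).mul
    (differentiable_planarHarmonic m sgn x)
  rw [hU.fderiv_eq, ← hdiff.lineDeriv_eq_fderiv,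
    (hasLineDerivAt_radialLegendre_mul_planarHarmonic _ _ m sgn hx).lineDeriv, solidU_eq _ _ _ hx,
    ← Function.iterate_succ_apply' derivative, Nat.succ_eq_add_one, legendreZ_ladder,
    sub_right_comm]
  simp only [radialLegendre, eval_mul, eval_C]
  push_cast
  ring

/-- `∂/∂x₀ U_{n,m}^{±} = (n+m) U_{n-1,m}^{±}`, valid both for
`n ≥ 1` and for `n ≤ -2`. -/
theorem stmt7 (n : ℤ) (m : ℕ) (sgn : Bool) (hn : 1 ≤ n ∨ n ≤ -2)
    (x : E3) (hx : x ≠ 0) :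
    fderiv ℝ (solidU n m sgn) x (EuclideanSpace.single 0 1) =
      ((n + (m : ℤ) : ℤ) : ℝ) * solidU (n - 1) m sgn x :=
  stmt7_general n m sgn x hx

end
end

section
/- There are no nonzero square-integrable monogenic constants on the exterior B^e = {x ∈ ℝ³ : |x| > 1}: if f : B^e → 𝒜 is smooth, satisfies both ∂̄f = 0 and ∂f = 0, and f ∈ L²(B^e), then f ≡ 0. -/
open MeasureTheory Real

noncomputable section

/-- The quaternions; the subspace `𝒜 = ℝ + ℝe₁ + ℝe₂` consists of those
quaternions with `imK = 0`. -/
abbrev H := Quaternion ℝ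

def qe1 : H := ⟨0, 1, 0, 0⟩
def qe2 : H := ⟨0, 0, 1, 0⟩

/-- Partial derivative `∂/∂xᵢ` of a quaternion-valued function. -/
def pd (i : Fin 3) (f : E3 → H) (x : E3) : H :=
  fderiv ℝ f x (EuclideanSpace.single i 1)

/-- The Cauchy–Riemann (Fueter) operator `∂̄ = ∂/∂x₀ + e₁∂/∂x₁ + e₂∂/∂x₂`. -/
def Dbar (f : E3 → H) (x : E3) : H := pd 0 f x + qe1 * pd 1 f x + qe2 * pd 2 f x

/-- The conjugate Fueter operator `∂ = ∂/∂x₀ − e₁∂/∂x₁ − e₂∂/∂x₂`. -/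
def Dop (f : E3 → H) (x : E3) : H := pd 0 f x - qe1 * pd 1 f x - qe2 * pd 2 f x

/-- The solid harmonic `U_{n,m}^±` regarded as a quaternion-valued function. -/
def solidUq (n : ℤ) (m : ℕ) (sgn : Bool) (x : E3) : H := ((solidU n m sgn x : ℝ) : H)

/-- The basic spherical monogenic `X_{n,m}^{±} = ∂U_{n+1,m}^{±}`. -/
def Xmon (n : ℤ) (m : ℕ) (sgn : Bool) : E3 → H := Dop (solidUq (n + 1) m sgn)

/-- The scalar inner product on `𝒜`-valued quaternions:
`⟨p,q⟩ = p₀q₀ + p₁q₁ + p₂q₂`. -/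
def qip (p q : H) : ℝ := p.re * q.re + p.imI * q.imI + p.imJ * q.imJ

/-! ### Auxiliary material for `stmt11` -/

section Aux

open Set

def imKC : H →L[ℝ] ℝ := LinearMap.toContinuousLinearMap (QuaternionAlgebra.imKₗ (-1 : ℝ) 0 (-1))
def reC : H →L[ℝ] ℝ := LinearMap.toContinuousLinearMap (QuaternionAlgebra.reₗ (-1 : ℝ) 0 (-1))

@[simp] lemma imKC_apply (q : H) : imKC q = q.imK := rfl
@[simp] lemma reC_apply (q : H) : reC q = q.re := rfl

def sigmaL : H →ₗ[ℝ] ℂ where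
  toFun q := ⟨q.imI, -q.imJ⟩
  map_add' p q := by apply Complex.ext <;> simp <;> ring
  map_smul' r q := by apply Complex.ext <;> simp [Complex.ofReal] <;> ring

def sigmaC : H →L[ℝ] ℂ := LinearMap.toContinuousLinearMap sigmaL

@[simp] lemma sigmaC_apply (q : H) : sigmaC q = ⟨q.imI, -q.imJ⟩ := rfl

def E0 : E3 := EuclideanSpace.single 0 1
def E1 : E3 := EuclideanSpace.single 1 1
def E2 : E3 := EuclideanSpace.single 2 1

lemma norm_E3 (x : E3) : ‖x‖ = Real.sqrt (x 0 ^ 2 + x 1 ^ 2 + x 2 ^ 2) := by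
  rw [EuclideanSpace.norm_eq]
  simp [Fin.sum_univ_three, sq_abs]

lemma mem_extB_iff (x : E3) : x ∈ extB ↔ 1 < x 0 ^ 2 + x 1 ^ 2 + x 2 ^ 2 := by
  rw [extB, Set.mem_setOf_eq, norm_E3, Real.lt_sqrt zero_le_one, one_pow]

lemma isOpen_extB : IsOpen extB := isOpen_lt continuous_const continuous_norm

@[simp] lemma E0_apply (i : Fin 3) : E0 i = if i = 0 then 1 else 0 := by
  simp [E0, EuclideanSpace.single_apply]

lemma pd_imK (f : E3 → H) (x : E3) (hx : DifferentiableAt ℝ f x)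
    (hA : ∀ y, (f y).imK = 0) (i : Fin 3) : (pd i f x).imK = 0 := by
  have h1 : HasFDerivAt (fun y => imKC (f y)) (imKC.comp (fderiv ℝ f x)) x :=
    imKC.hasFDerivAt.comp x hx.hasFDerivAt
  have h2 : (fun y => imKC (f y)) = fun _ => (0:ℝ) := by
    funext y; simp [hA y]
  rw [h2] at h1
  have h3 : imKC.comp (fderiv ℝ f x) = 0 := ((hasFDerivAt_const (0:ℝ) x).unique h1).symm
  have := congrArg (fun L : E3 →L[ℝ] ℝ => L (EuclideanSpace.single i 1)) h3
  simpa [pd] using this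

lemma rels (f : E3 → H) (hA : ∀ y, (f y).imK = 0)
    (hd : ∀ x ∈ extB, DifferentiableAt ℝ f x)
    (hmono : ∀ x ∈ extB, Dbar f x = 0) (hanti : ∀ x ∈ extB, Dop f x = 0) :
    ∀ x ∈ extB, pd 0 f x = 0 ∧ (pd 1 f x).re = 0 ∧ (pd 2 f x).re = 0 ∧
      ((pd 1 f x).imI + (pd 2 f x).imJ = 0) ∧ ((pd 1 f x).imJ - (pd 2 f x).imI = 0) := by
  intro x hx
  have h1 : pd 0 f x + qe1 * pd 1 f x + qe2 * pd 2 f x = 0 := hmono x hx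
  have h2 : pd 0 f x - qe1 * pd 1 f x - qe2 * pd 2 f x = 0 := hanti x hx
  have h0 : pd 0 f x = 0 := by
    have h3 : pd 0 f x + pd 0 f x = 0 := by
      calc pd 0 f x + pd 0 f x
          = (pd 0 f x + qe1 * pd 1 f x + qe2 * pd 2 f x)
            + (pd 0 f x - qe1 * pd 1 f x - qe2 * pd 2 f x) := by abel
        _ = 0 := by rw [h1, h2, add_zero]
    rw [Quaternion.ext_iff] at h3 ⊢
    simp only [Quaternion.re_add, Quaternion.imI_add, Quaternion.imJ_add, Quaternion.imK_add,
      Quaternion.re_zero, Quaternion.imI_zero, Quaternion.imJ_zero, Quaternion.imK_zero] at h3 ⊢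
    obtain ⟨e1, e2, e3, e4⟩ := h3
    refine ⟨by linarith, by linarith, by linarith, by linarith⟩
  have h4 : qe1 * pd 1 f x + qe2 * pd 2 f x = 0 := by
    rw [h0] at h1; simpa using h1
  have hBK : (pd 1 f x).imK = 0 := pd_imK f x (hd x hx) hA 1
  have hCK : (pd 2 f x).imK = 0 := pd_imK f x (hd x hx) hA 2
  rw [Quaternion.ext_iff] at h4
  simp only [Quaternion.re_add, Quaternion.imI_add, Quaternion.imJ_add, Quaternion.imK_add,
    Quaternion.re_mul, Quaternion.imI_mul, Quaternion.imJ_mul, Quaternion.imK_mul,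
    Quaternion.re_zero, Quaternion.imI_zero, Quaternion.imJ_zero, Quaternion.imK_zero] at h4
  simp [qe1, qe2, hBK, hCK] at h4
  obtain ⟨e1, e2, e3, e4⟩ := h4
  exact ⟨h0, by linarith, by linarith, by linarith, by linarith⟩

lemma shift_lemma (f : E3 → H) (hd : ∀ x ∈ extB, DifferentiableAt ℝ f x)
    (h0 : ∀ x ∈ extB, pd 0 f x = 0) (p : E3) (t : ℝ)
    (hseg : ∀ s ∈ Icc (min 0 t) (max 0 t), p + s • E0 ∈ extB) :
    f (p + t • E0) = f p := by
  set a := min 0 t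
  set b := max 0 t
  set g : ℝ → H := fun s => f (p + s • E0) with hg
  have hcurve : ∀ s : ℝ, HasDerivAt (fun u : ℝ => p + u • E0) E0 s := by
    intro s
    simpa using ((hasDerivAt_id s).smul_const E0).const_add p
  have hderiv : ∀ s ∈ Icc a b, HasDerivAt g 0 s := by
    intro s hs
    have hmem := hseg s hs
    have := ((hd _ hmem).hasFDerivAt.comp_hasDerivAt s (hcurve s))
    have h00 : fderiv ℝ f (p + s • E0) E0 = 0 := h0 _ hmem
    rw [h00] at this
    exact this
  have hconst : ∀ x ∈ Icc a b, g x = g a :=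
    constant_of_has_deriv_right_zero
      (fun s hs => ((hderiv s hs).continuousAt).continuousWithinAt)
      (fun s hs => ((hderiv s (Ico_subset_Icc_self hs)).hasDerivWithinAt))
  have h0m : (0:ℝ) ∈ Icc a b := ⟨min_le_left _ _, le_max_left _ _⟩
  have htm : t ∈ Icc a b := ⟨min_le_right _ _, le_max_right _ _⟩
  have := (hconst t htm).trans (hconst 0 h0m).symm
  simpa [hg] using this

lemma cyl_volume (a b a' b' : ℝ) (h : a < b) (h' : a' < b') :
    volume {y : E3 | y 1 ∈ Ioo a b ∧ y 2 ∈ Ioo a' b'} = ⊤ := by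
  set S : Fin 3 → Set ℝ := ![univ, Ioo a b, Ioo a' b'] with hS
  have hmS : MeasurableSet (univ.pi S) := by
    apply MeasurableSet.univ_pi
    intro i; fin_cases i <;> simp [hS]
  have hpre : (⇑(MeasurableEquiv.toLp 2 (Fin 3 → ℝ)).symm) ⁻¹' (univ.pi S)
      = {y : E3 | y 1 ∈ Ioo a b ∧ y 2 ∈ Ioo a' b'} := by
    ext y
    simp [Set.mem_pi, Fin.forall_fin_succ, hS]
  rw [← hpre, (EuclideanSpace.volume_preserving_symm_measurableEquiv_toLp (Fin 3)).measure_preimage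
    hmS.nullMeasurableSet, volume_pi_pi, Fin.prod_univ_three]
  simp [hS, Real.volume_Ioo]
  rw [ENNReal.top_mul (by simp [ENNReal.ofReal_eq_zero]; linarith),
    ENNReal.top_mul (by simp [ENNReal.ofReal_eq_zero]; linarith)]

def Pm (c : ℝ) (z : ℂ) : E3 := c • E0 + z.re • E1 + z.im • E2

def P' : ℂ →L[ℝ] E3 := Complex.reCLM.smulRight E1 + Complex.imCLM.smulRight E2

lemma hasFDerivAt_Pm (c : ℝ) (z : ℂ) : HasFDerivAt (Pm c) P' z := by
  have : Pm c = fun z => c • E0 + P' z := by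
    funext w
    simp [Pm, P', ContinuousLinearMap.add_apply, add_assoc]
  rw [this]
  exact (P'.hasFDerivAt).const_add _

@[simp] lemma Pm_apply0 (c : ℝ) (z : ℂ) : Pm c z 0 = c := by
  simp [Pm, E0, E1, E2, EuclideanSpace.single_apply]
@[simp] lemma Pm_apply1 (c : ℝ) (z : ℂ) : Pm c z 1 = z.re := by
  simp [Pm, E0, E1, E2, EuclideanSpace.single_apply]
@[simp] lemma Pm_apply2 (c : ℝ) (z : ℂ) : Pm c z 2 = z.im := by
  simp [Pm, E0, E1, E2, EuclideanSpace.single_apply]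

lemma holo_step (f : E3 → H) (c : ℝ) (z : ℂ)
    (hd : DifferentiableAt ℝ f (Pm c z))
    (hr1 : (pd 1 f (Pm c z)).imI + (pd 2 f (Pm c z)).imJ = 0)
    (hr2 : (pd 1 f (Pm c z)).imJ - (pd 2 f (Pm c z)).imI = 0) :
    HasFDerivAt (fun w => sigmaC (f (Pm c w)))
      ((sigmaC (pd 1 f (Pm c z))) • (1 : ℂ →L[ℂ] ℂ)) z := by
  have hreal : HasFDerivAt (fun w => sigmaC (f (Pm c w)))
      (sigmaC.comp ((fderiv ℝ f (Pm c z)).comp P')) z :=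
    sigmaC.hasFDerivAt.comp z (hd.hasFDerivAt.comp z (hasFDerivAt_Pm c z))
  apply hasFDerivAt_of_restrictScalars ℝ hreal
  apply ContinuousLinearMap.ext
  intro w
  have hPw : P' w = w.re • E1 + w.im • E2 := by
    simp [P', ContinuousLinearMap.add_apply]
  simp only [ContinuousLinearMap.coe_restrictScalars', ContinuousLinearMap.smul_apply,
    ContinuousLinearMap.one_apply, ContinuousLinearMap.coe_comp', Function.comp_apply, hPw,
    map_add, _root_.map_smul]
  set B := pd 1 f (Pm c z) with hB
  set C := pd 2 f (Pm c z) with hC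
  have hfB : fderiv ℝ f (Pm c z) E1 = B := rfl
  have hfC : fderiv ℝ f (Pm c z) E2 = C := rfl
  rw [hfB, hfC]
  apply Complex.ext <;>
    simp [Complex.mul_re, Complex.mul_im, Complex.smul_re, Complex.smul_im, smul_eq_mul] <;>
    first
    | linear_combination w.im * hr2
    | linear_combination w.im * hr1

end Aux


set_option maxHeartbeats 2000000 in
/-- there are no nonzero square-integrable monogenic constants on
the exterior `B^e` of the unit ball. -/
theorem stmt11 (f : E3 → H) (hA : ∀ x, (f x).imK = 0)
    (hs : ContDiffOn ℝ (⊤ : ℕ∞) f extB)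
    (hmono : ∀ x ∈ extB, Dbar f x = 0) (hanti : ∀ x ∈ extB, Dop f x = 0)
    (hL2 : IntegrableOn (fun x => ‖f x‖ ^ 2) extB volume) :
    ∀ x ∈ extB, f x = 0 := by
  classical
  have hd : ∀ x ∈ extB, DifferentiableAt ℝ f x := fun y hy =>
    (hs.contDiffAt (isOpen_extB.mem_nhds hy)).differentiableAt (by simp)
  have hrel := rels f hA hd hmono hanti
  have h0 : ∀ x ∈ extB, pd 0 f x = 0 := fun y hy => (hrel y hy).1
  -- Step A: f vanishes on the cylinder region
  have hzero : ∀ y : E3, 1 < y 1 ^ 2 + y 2 ^ 2 → f y = 0 := by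
    intro p hp
    by_contra hfp
    have hpe : p ∈ extB := (mem_extB_iff p).mpr (by nlinarith [sq_nonneg (p 0)])
    have hcp : ContinuousAt f p := hs.continuousOn.continuousAt (isOpen_extB.mem_nhds hpe)
    have hε0 : 0 < ‖f p‖ := norm_pos_iff.mpr hfp
    set ε := ‖f p‖ with hεdef
    have h1 : ∀ᶠ y in nhds p, ε / 2 < ‖f y‖ :=
      hcp.norm.eventually (eventually_gt_nhds (by linarith))
    have hc2 : Continuous (fun y : E3 => y 1 ^ 2 + y 2 ^ 2) := by
      have ha : Continuous fun y : E3 => y 1 :=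
        (EuclideanSpace.proj (1 : Fin 3) (𝕜 := ℝ)).continuous
      have hb : Continuous fun y : E3 => y 2 :=
        (EuclideanSpace.proj (2 : Fin 3) (𝕜 := ℝ)).continuous
      exact (ha.pow 2).add (hb.pow 2)
    have h2 : ∀ᶠ y in nhds p, 1 < y 1 ^ 2 + y 2 ^ 2 :=
      hc2.continuousAt.eventually (eventually_gt_nhds hp)
    obtain ⟨δ0, hδ0, hball⟩ := Metric.eventually_nhds_iff.mp (h1.and h2)
    set δ := δ0 / 2 with hδdef
    have hδ : 0 < δ := by positivity
    set Z := {y : E3 | y 1 ∈ Set.Ioo (p 1 - δ) (p 1 + δ) ∧ y 2 ∈ Set.Ioo (p 2 - δ) (p 2 + δ)}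
      with hZdef
    have key : ∀ y ∈ Z, ε / 2 < ‖f y‖ ∧ y ∈ extB := by
      intro y hy
      obtain ⟨hy1, hy2⟩ := hy
      have hd1 : |y 1 - p 1| < δ := abs_lt.mpr ⟨by linarith [hy1.1], by linarith [hy1.2]⟩
      have hd2 : |y 2 - p 2| < δ := abs_lt.mpr ⟨by linarith [hy2.1], by linarith [hy2.2]⟩
      set q : E3 := y + (p 0 - y 0) • E0 with hqdef
      have hq0 : q 0 = p 0 := by simp [hqdef]
      have hq1 : q 1 = y 1 := by simp [hqdef]
      have hq2 : q 2 = y 2 := by simp [hqdef]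
      have hqdist : dist q p < δ0 := by
        have e0 : dist (q 0) (p 0) = 0 := by rw [hq0]; simp
        have e1 : dist (q 1) (p 1) = |y 1 - p 1| := by rw [hq1, Real.dist_eq]
        have e2 : dist (q 2) (p 2) = |y 2 - p 2| := by rw [hq2, Real.dist_eq]
        rw [EuclideanSpace.dist_eq, Fin.sum_univ_three, e0, e1, e2]
        apply (Real.sqrt_lt' hδ0).mpr
        have a1 : (0:ℝ) ≤ |y 1 - p 1| := abs_nonneg _
        have a2 : (0:ℝ) ≤ |y 2 - p 2| := abs_nonneg _
        nlinarith
      have hq := hball hqdist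
      have hy12 : 1 < y 1 ^ 2 + y 2 ^ 2 := by
        have := hq.2
        rwa [hq1, hq2] at this
      have hyext : y ∈ extB := (mem_extB_iff y).mpr (by nlinarith [sq_nonneg (y 0)])
      have hshift : f q = f y := by
        rw [hqdef]
        apply shift_lemma f hd h0 y (p 0 - y 0)
        intro s hs
        rw [mem_extB_iff]
        have c1 : (y + s • E0) 1 = y 1 := by simp
        have c2 : (y + s • E0) 2 = y 2 := by simp
        rw [c1, c2]
        nlinarith [sq_nonneg ((y + s • E0) 0)]
      exact ⟨by rw [← hshift]; exact hq.1, hyext⟩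
    have hZsub : Z ⊆ extB := fun y hy => (key y hy).2
    have hZm : MeasurableSet Z := by
      have m1 : Measurable fun y : E3 => y 1 :=
        (EuclideanSpace.proj (1 : Fin 3) (𝕜 := ℝ)).continuous.measurable
      have m2 : Measurable fun y : E3 => y 2 :=
        (EuclideanSpace.proj (2 : Fin 3) (𝕜 := ℝ)).continuous.measurable
      exact (m1 measurableSet_Ioo).inter (m2 measurableSet_Ioo)
    have hvol : volume Z = ⊤ := cyl_volume _ _ _ _ (by linarith) (by linarith)
    have hint : IntegrableOn (fun x => ‖f x‖ ^ 2) Z volume := hL2.mono_set hZsub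
    have hfin : (∫⁻ y in Z, ‖(‖f y‖ ^ 2)‖ₑ ∂volume) < ⊤ := hint.2
    have hlow : ∀ᵐ y ∂(volume.restrict Z),
        ENNReal.ofReal ((ε / 2) ^ 2) ≤ (‖(‖f y‖ ^ 2)‖ₑ : ENNReal) := by
      rw [ae_restrict_iff' hZm]
      refine ae_of_all _ (fun y hy => ?_)
      have h := (key y hy).1
      rw [Real.enorm_eq_ofReal (by positivity)]
      exact ENNReal.ofReal_le_ofReal (by nlinarith [norm_nonneg (f y)])
    have hge := lintegral_mono_ae hlow
    rw [lintegral_const, Measure.restrict_apply_univ, hvol,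
      ENNReal.mul_top (by simp [ENNReal.ofReal_eq_zero, not_le]; positivity)] at hge
    exact absurd (lt_of_le_of_lt hge hfin) (lt_irrefl ⊤)
  -- Step B: f vanishes on every slice x₀ = c with c² > 1
  have hslice : ∀ (c : ℝ), 1 < c ^ 2 → ∀ z : ℂ, f (Pm c z) = 0 := by
    intro c hc z
    have hmem : ∀ w : ℂ, Pm c w ∈ extB := fun w => (mem_extB_iff _).mpr (by
      rw [Pm_apply0, Pm_apply1, Pm_apply2]; nlinarith [sq_nonneg w.re, sq_nonneg w.im])
    have hF : ∀ w : ℂ, HasFDerivAt (fun u => sigmaC (f (Pm c u)))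
        ((sigmaC (pd 1 f (Pm c w))) • (1 : ℂ →L[ℂ] ℂ)) w := fun w =>
      holo_step f c w (hd _ (hmem w)) (hrel _ (hmem w)).2.2.2.1 (hrel _ (hmem w)).2.2.2.2
    have hFd : Differentiable ℂ (fun u => sigmaC (f (Pm c u))) := fun w =>
      (hF w).differentiableAt
    have hFan : AnalyticOnNhd ℂ (fun u => sigmaC (f (Pm c u))) Set.univ :=
      hFd.differentiableOn.analyticOnNhd isOpen_univ
    have hbig : ∀ w : ℂ, 2 < ‖w‖ → f (Pm c w) = 0 := by
      intro w hw
      apply hzero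
      rw [Pm_apply1, Pm_apply2]
      have habs : ‖w‖ ^ 2 = w.re ^ 2 + w.im ^ 2 := by
        rw [Complex.sq_norm, Complex.normSq_apply]; ring
      nlinarith
    have hev : (fun u => sigmaC (f (Pm c u))) =ᶠ[nhds (3 : ℂ)] 0 := by
      filter_upwards [Metric.ball_mem_nhds (3 : ℂ) one_pos] with w hw
      have h1 : dist w 3 < 1 := Metric.mem_ball.mp hw
      have h3 : ‖(3 : ℂ)‖ - ‖w‖ ≤ ‖(3 : ℂ) - w‖ := norm_sub_norm_le _ _
      have h4 : ‖(3 : ℂ) - w‖ < 1 := by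
        rw [norm_sub_rev, ← dist_eq_norm]; exact h1
      have h5 : ‖(3 : ℂ)‖ = 3 := by norm_num
      have habs : 2 < ‖w‖ := by linarith
      simp [hbig w habs, Complex.ext_iff, Quaternion.imI_zero, Quaternion.imJ_zero]
    have hFzero := hFan.eqOn_zero_of_preconnected_of_eventuallyEq_zero isPreconnected_univ
      (Set.mem_univ (3 : ℂ)) hev
    have hG : ∀ w : ℂ, HasFDerivAt (fun u => reC (f (Pm c u))) (0 : ℂ →L[ℝ] ℝ) w := by
      intro w
      have hreal : HasFDerivAt (fun u => reC (f (Pm c u)))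
          (reC.comp ((fderiv ℝ f (Pm c w)).comp P')) w :=
        reC.hasFDerivAt.comp w ((hd _ (hmem w)).hasFDerivAt.comp w (hasFDerivAt_Pm c w))
      have hzeroL : reC.comp ((fderiv ℝ f (Pm c w)).comp P') = 0 := by
        apply ContinuousLinearMap.ext
        intro v
        have hPv : P' v = v.re • E1 + v.im • E2 := by
          simp [P', ContinuousLinearMap.add_apply]
        simp only [ContinuousLinearMap.coe_comp', Function.comp_apply, hPv, map_add,
          _root_.map_smul, ContinuousLinearMap.zero_apply]
        have hB : fderiv ℝ f (Pm c w) E1 = pd 1 f (Pm c w) := rfl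
        have hC : fderiv ℝ f (Pm c w) E2 = pd 2 f (Pm c w) := rfl
        rw [hB, hC]
        simp [smul_eq_mul, (hrel _ (hmem w)).2.1, (hrel _ (hmem w)).2.2.1]
      rw [← hzeroL]; exact hreal
    have hGd : Differentiable ℝ (fun u => reC (f (Pm c u))) := fun w => (hG w).differentiableAt
    have hGconst := is_const_of_fderiv_eq_zero (𝕜 := ℝ) hGd (fun w => (hG w).fderiv) z 3
    have h3zero : f (Pm c 3) = 0 := hbig 3 (by
      have : ‖(3 : ℂ)‖ = 3 := by simp
      rw [this]; norm_num)
    have hre : (f (Pm c z)).re = 0 := by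
      simp only [reC_apply] at hGconst
      rw [hGconst, h3zero]; simp [Quaternion.re_zero]
    have hsig : sigmaC (f (Pm c z)) = 0 := hFzero (Set.mem_univ z)
    rw [sigmaC_apply, Complex.ext_iff] at hsig
    simp only [Complex.zero_re, Complex.zero_im, neg_eq_zero] at hsig
    rw [Quaternion.ext_iff]
    simp only [Quaternion.re_zero, Quaternion.imI_zero, Quaternion.imJ_zero, Quaternion.imK_zero]
    exact ⟨hre, hsig.1, hsig.2, hA _⟩
  -- Final assembly
  intro x hx
  by_cases hxy : 1 < x 1 ^ 2 + x 2 ^ 2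
  · exact hzero x hxy
  · push_neg at hxy
    have hx3 : 1 < x 0 ^ 2 + x 1 ^ 2 + x 2 ^ 2 := (mem_extB_iff x).mp hx
    set t : ℝ := if 0 ≤ x 0 then 2 else -2 with htdef
    have hseg : ∀ s ∈ Set.Icc (min 0 t) (max 0 t), x + s • E0 ∈ extB := by
      intro s hs
      rw [mem_extB_iff]
      have c0 : (x + s • E0) 0 = x 0 + s := by simp
      have c1 : (x + s • E0) 1 = x 1 := by simp
      have c2 : (x + s • E0) 2 = x 2 := by simp
      rw [c0, c1, c2]
      by_cases hx0 : 0 ≤ x 0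
      · rw [htdef, if_pos hx0] at hs
        simp only [Set.mem_Icc] at hs
        have hs0 : 0 ≤ s := le_trans (le_min le_rfl (by norm_num)) hs.1
        nlinarith
      · push_neg at hx0
        rw [htdef, if_neg (not_le.mpr hx0)] at hs
        simp only [Set.mem_Icc] at hs
        have hs0 : s ≤ 0 := le_trans hs.2 (max_le le_rfl (by norm_num))
        nlinarith
    have hshift := shift_lemma f hd h0 x t hseg
    have hc : 1 < (x 0 + t) ^ 2 := by
      by_cases hx0 : 0 ≤ x 0
      · rw [htdef, if_pos hx0]; nlinarith
      · push_neg at hx0; rw [htdef, if_neg (not_le.mpr hx0)]; nlinarith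
    have hxq : x + t • E0 = Pm (x 0 + t) ⟨x 1, x 2⟩ := by
      ext i
      fin_cases i <;> simp
    rw [← hshift, hxq]
    exact hslice (x 0 + t) hc ⟨x 1, x 2⟩

end
end

section
/- For n ≥ 1 (interior case) or n ≤ -2 (exterior case), and indices m₁, m₂ in the admissible ranges with (n₁,m₁) ≠ (n₂,m₂) or mixed parities ±/∓, the basic monogenics and antimonogenics satisfy ⟨X̄_{n₁,m₁}^{+}, X_{n₂,m₂}^{-}⟩ = ⟨X̄_{n₁,m₁}^{-}, X_{n₂,m₂}^{+}⟩ = 0 in the L² inner product on the respective domain. -/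
open MeasureTheory Real

noncomputable section

/-! The reflection `x₂ ↦ -x₂` fixes `ρ` and `cos θ` and conjugates `x₁ + i x₂`, so it fixes
`U^+_{n,m}` and negates `U^-_{n,m}`. For real `u, v` the integrand `qip (star (∂u)) (∂v)` is
the signed sum `∂₀u ∂₀v - ∂₁u ∂₁v - ∂₂u ∂₂v`; since the reflection maps every coordinate axis
to itself, this integrand picks up the product of the parities of `u` and `v`. For opposite
parities it is odd, and both the ball and the exterior domain are invariant, so the integral
vanishes. -/

section Calculus

variable {𝕜 E F G : Type*} [NontriviallyNormedField 𝕜]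
  [NormedAddCommGroup E] [NormedSpace 𝕜 E]
  [NormedAddCommGroup F] [NormedSpace 𝕜 F]
  [NormedAddCommGroup G] [NormedSpace 𝕜 G]

theorem ContinuousLinearMap.fderiv_comp_of_leftInverse {L : F →L[𝕜] G} {P : G →L[𝕜] F}
    (hPL : Function.LeftInverse P L) (f : E → F) (x : E) :
    fderiv 𝕜 (L ∘ f) x = L.comp (fderiv 𝕜 f x) := by
  by_cases hf : DifferentiableAt 𝕜 f x
  · rw [fderiv_comp x L.differentiableAt hf, L.fderiv]
  · have hLf : ¬DifferentiableAt 𝕜 (L ∘ f) x := fun h ↦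
      hf (by simpa [Function.comp_def, hPL _] using P.differentiableAt.comp x h)
    rw [fderiv_zero_of_not_differentiableAt hf, fderiv_zero_of_not_differentiableAt hLf,
      ContinuousLinearMap.comp_zero]

theorem fderiv_map_apply_map_of_comp_eq_smul (σ : E ≃L[𝕜] E) {u : E → F} {c : 𝕜}
    (hu : u ∘ σ = c • u) (x w : E) :
    fderiv 𝕜 u (σ x) (σ w) = c • fderiv 𝕜 u x w := by
  have h := congrArg (fun g ↦ fderiv 𝕜 g x w) hu
  simpa [σ.comp_right_fderiv, fderiv_const_smul_field] using h

theorem fderiv_mul_fderiv_map_of_comp_eq_smul (σ : E ≃L[𝕜] E) {u v : E → 𝕜} {a b ε : 𝕜}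
    (hu : u ∘ σ = a • u) (hv : v ∘ σ = b • v) {e : E} (he : σ e = ε • e) (hε : ε * ε = 1)
    (x : E) :
    fderiv 𝕜 u (σ x) e * fderiv 𝕜 v (σ x) e = a * b * (fderiv 𝕜 u x e * fderiv 𝕜 v x e) := by
  have hu' := fderiv_map_apply_map_of_comp_eq_smul σ hu x e
  have hv' := fderiv_map_apply_map_of_comp_eq_smul σ hv x e
  simp only [he, map_smul, smul_eq_mul] at hu' hv'
  linear_combination (-(fderiv 𝕜 u (σ x) e * fderiv 𝕜 v (σ x) e)) * hε +
    (ε * fderiv 𝕜 v (σ x) e) * hu' + (a * fderiv 𝕜 u x e) * hv'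

end Calculus

theorem setIntegral_eq_zero_of_comp_eq_neg {α G : Type*} [MeasurableSpace α]
    [NormedAddCommGroup G] [NormedSpace ℝ G] {μ : Measure α} {f : α → α}
    (hf : MeasurePreserving f μ μ) (hfe : MeasurableEmbedding f) {s : Set α}
    (hs : f ⁻¹' s = s) {g : α → G} (hg : ∀ x, g (f x) = -g x) :
    ∫ x in s, g x ∂μ = 0 := by
  have h := hf.setIntegral_preimage_emb hfe g s
  simp only [hs, hg, integral_neg] at h
  linear_combination (norm := module) (-(2 : ℝ)⁻¹) • h

section Reflection

variable {ι : Type*} [Fintype ι] [DecidableEq ι]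

def reflectCoord (j : ι) : EuclideanSpace ℝ ι ≃ₗᵢ[ℝ] EuclideanSpace ℝ ι :=
  LinearIsometryEquiv.piLpCongrRight 2 fun i ↦
    if i = j then LinearIsometryEquiv.neg ℝ else LinearIsometryEquiv.refl ℝ ℝ

@[simp]
theorem reflectCoord_apply (j : ι) (x : EuclideanSpace ℝ ι) (i : ι) :
    reflectCoord j x i = if i = j then -x i else x i := by
  by_cases h : i = j <;> simp [reflectCoord, h]

theorem reflectCoord_single (j i : ι) :
    reflectCoord j (EuclideanSpace.single i 1) =
      (if i = j then -1 else 1 : ℝ) • EuclideanSpace.single i 1 := by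
  ext k
  by_cases hk : k = i <;> by_cases hi : i = j <;> simp_all

end Reflection

-- `arg (conj z) = -arg z` except on the negative real axis, where `sin (m π) = 0` rescues it.
theorem PhiFac_arg_conj (m : ℕ) (sgn : Bool) (z : ℂ) :
    PhiFac m sgn (starRingEnd ℂ z).arg = (if sgn then 1 else -1) * PhiFac m sgn z.arg := by
  cases sgn <;> by_cases hz : z.arg = π <;>
    simp [PhiFac, Complex.arg_conj, hz, Real.sin_nat_mul_pi]

theorem solidU_comp_reflectCoord (n : ℤ) (m : ℕ) (sgn : Bool) :
    solidU n m sgn ∘ reflectCoord 2 = (if sgn then 1 else -1 : ℝ) • solidU n m sgn := by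
  ext x
  have hphi : sphPhi (reflectCoord 2 x) = (starRingEnd ℂ ⟨x 1, x 2⟩).arg := by
    congr 1
  have hrho : sphRho (reflectCoord 2 x) = sphRho x := by simp [sphRho]
  have hx0 : reflectCoord 2 x 0 = x 0 := by simp
  simp only [Function.comp_apply, Pi.smul_apply, smul_eq_mul, solidU, hrho, hphi, hx0,
    PhiFac_arg_conj]
  rw [show Complex.arg ⟨x 1, x 2⟩ = sphPhi x from rfl]
  ring

theorem pd_coe (u : E3 → ℝ) (i : Fin 3) (x : E3) :
    pd i (fun y ↦ (u y : H)) x = (fderiv ℝ u x (EuclideanSpace.single i 1) : H) := by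
  -- `show` keeps the carrier `H`: the topology lives on `Quaternion ℝ`, not on `QuaternionAlgebra`.
  have hleft : Function.LeftInverse
      (show H →ₗ[ℝ] ℝ from QuaternionAlgebra.reₗ _ _ _).toContinuousLinearMap
      (Algebra.linearMap ℝ H).toContinuousLinearMap := fun r ↦ Quaternion.re_coe r
  exact congrArg (· (EuclideanSpace.single i 1))
    (ContinuousLinearMap.fderiv_comp_of_leftInverse hleft u x)

theorem qip_star_Dop_coe (u v : E3 → ℝ) (x : E3) :
    qip (star (Dop (fun y ↦ (u y : H)) x)) (Dop (fun y ↦ (v y : H)) x) =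
      ∑ i : Fin 3, ![1, -1, -1] i *
        (fderiv ℝ u x (EuclideanSpace.single i 1) * fderiv ℝ v x (EuclideanSpace.single i 1)) := by
  simp only [Dop, pd_coe, qip, Fin.sum_univ_three, Quaternion.re_sub, Quaternion.imI_sub,
    Quaternion.imJ_sub, Quaternion.re_mul, Quaternion.imI_mul, Quaternion.imJ_mul,
    Quaternion.re_star, Quaternion.imI_star, Quaternion.imJ_star, Quaternion.re_coe,
    Quaternion.imI_coe, Quaternion.imJ_coe, Quaternion.imK_coe]
  simp only [qe1, qe2, Matrix.cons_val]
  ring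

theorem qip_star_Dop_coe_reflectCoord {u v : E3 → ℝ} {a b : ℝ}
    (hu : u ∘ reflectCoord 2 = a • u) (hv : v ∘ reflectCoord 2 = b • v) (x : E3) :
    qip (star (Dop (fun y ↦ (u y : H)) (reflectCoord 2 x)))
        (Dop (fun y ↦ (v y : H)) (reflectCoord 2 x)) =
      a * b * qip (star (Dop (fun y ↦ (u y : H)) x)) (Dop (fun y ↦ (v y : H)) x) := by
  rw [qip_star_Dop_coe, qip_star_Dop_coe, Finset.mul_sum]
  refine Finset.sum_congr rfl fun i _ ↦ ?_
  have h := fderiv_mul_fderiv_map_of_comp_eq_smul (reflectCoord 2).toContinuousLinearEquiv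
    hu hv (reflectCoord_single 2 i) (by split_ifs <;> norm_num) x
  simp only [LinearIsometryEquiv.coe_toContinuousLinearEquiv] at h
  rw [h]
  ring

theorem qip_star_Xmon_reflectCoord (n₁ n₂ : ℤ) (m₁ m₂ : ℕ) (s : Bool) (x : E3) :
    qip (star (Xmon n₁ m₁ s (reflectCoord 2 x))) (Xmon n₂ m₂ (!s) (reflectCoord 2 x)) =
      -qip (star (Xmon n₁ m₁ s x)) (Xmon n₂ m₂ (!s) x) := by
  have h := qip_star_Dop_coe_reflectCoord (solidU_comp_reflectCoord (n₁ + 1) m₁ s)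
    (solidU_comp_reflectCoord (n₂ + 1) m₂ (!s)) x
  cases s <;> norm_num at h <;> exact h

theorem stmt12_general (n₁ n₂ : ℤ) (m₁ m₂ : ℕ) :
    ((1 ≤ n₁ ∧ 1 ≤ n₂ ∧ (m₁ : ℤ) ≤ n₁ + 1 ∧ (m₂ : ℤ) ≤ n₂ + 1) →
      (∫ x in Metric.ball (0 : E3) 1, qip (star (Xmon n₁ m₁ true x)) (Xmon n₂ m₂ false x)) = 0 ∧
      (∫ x in Metric.ball (0 : E3) 1, qip (star (Xmon n₁ m₁ false x)) (Xmon n₂ m₂ true x)) = 0) ∧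
    ((n₁ ≤ -2 ∧ n₂ ≤ -2 ∧ (m₁ : ℤ) ≤ -n₁ - 2 ∧ (m₂ : ℤ) ≤ -n₂ - 2) →
      (∫ x in extB, qip (star (Xmon n₁ m₁ true x)) (Xmon n₂ m₂ false x)) = 0 ∧
      (∫ x in extB, qip (star (Xmon n₁ m₁ false x)) (Xmon n₂ m₂ true x)) = 0) := by
  have hσ := (reflectCoord (2 : Fin 3)).measurePreserving
  have hσe := (reflectCoord (2 : Fin 3)).toHomeomorph.measurableEmbedding
  have hball : reflectCoord 2 ⁻¹' Metric.ball (0 : E3) 1 = Metric.ball 0 1 := by simp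
  have hextB : reflectCoord 2 ⁻¹' extB = extB := by
    ext x
    simp [extB]
  have hodd := qip_star_Xmon_reflectCoord n₁ n₂ m₁ m₂
  exact ⟨fun _ ↦ ⟨setIntegral_eq_zero_of_comp_eq_neg hσ hσe hball (hodd true),
      setIntegral_eq_zero_of_comp_eq_neg hσ hσe hball (hodd false)⟩,
    fun _ ↦ ⟨setIntegral_eq_zero_of_comp_eq_neg hσ hσe hextB (hodd true),
      setIntegral_eq_zero_of_comp_eq_neg hσ hσe hextB (hodd false)⟩⟩

/-- orthogonality of basic antimonogenics `X̄` of one parity with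
basic monogenics `X` of the other parity, for distinct index pairs, both on the
unit ball (`n ≥ 1`) and on the exterior (`n ≤ -2`). -/
theorem stmt12 (n₁ n₂ : ℤ) (m₁ m₂ : ℕ) (hne : (n₁, m₁) ≠ (n₂, m₂)) :
    ((1 ≤ n₁ ∧ 1 ≤ n₂ ∧ (m₁ : ℤ) ≤ n₁ + 1 ∧ (m₂ : ℤ) ≤ n₂ + 1) →
      (∫ x in Metric.ball (0 : E3) 1, qip (star (Xmon n₁ m₁ true x)) (Xmon n₂ m₂ false x)) = 0 ∧
      (∫ x in Metric.ball (0 : E3) 1, qip (star (Xmon n₁ m₁ false x)) (Xmon n₂ m₂ true x)) = 0) ∧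
    ((n₁ ≤ -2 ∧ n₂ ≤ -2 ∧ (m₁ : ℤ) ≤ -n₁ - 2 ∧ (m₂ : ℤ) ≤ -n₂ - 2) →
      (∫ x in extB, qip (star (Xmon n₁ m₁ true x)) (Xmon n₂ m₂ false x)) = 0 ∧
      (∫ x in extB, qip (star (Xmon n₁ m₁ false x)) (Xmon n₂ m₂ true x)) = 0) :=
  stmt12_general n₁ n₂ m₁ m₂

end
end
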